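/- arXiv:2501.02354 — 4 statements merged into one kernel-verified Lean document; each statement's English description precedes it below -/
import Mathlib

section
/- Let V be a finite nonempty set of N nodes and E ⊆ V × V a set of directed edges. For i ∈ V let d_out(i) = |{j : (i,j) ∈ E}|, for j ∈ V let P_j = {i : (i,j) ∈ E} and d_in(j) = |P_j|, and assume d_in(j) ≥ 1 for every j ∈ V. Let γ be a real number with 0 < γ < 1 and let F : V → ℝ be any function. For an edge (i,j) ∈ E write D(i,j) = F(i)/d_out(i) − F(j)/(γ·d_in(j)). Then Σ_{j∈V} ( γ·Σ_{i∈P_j} F(i)/d_out(i) + (1−γ)/N − F(j) )² ≤ Σ_{(i,j)∈E} [ d_in(j)·γ²·D(i,j)² + (2γ(1−γ)/N)·D(i,j) + (1−γ)²/(d_in(j)·N²) ]. -/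
open Finset

/-- Lemma 2 (upper bound of the deep PageRank objective via Cauchy–Schwarz):
the PageRank-style squared loss summed over nodes is bounded by the
edge-decomposed sum. -/
theorem deep_pagerank_objective_upper_bound
    {V : Type*} [Fintype V] [Nonempty V] [DecidableEq V]
    (E : Finset (V × V)) (γ : ℝ) (hγ0 : 0 < γ) (hγ1 : γ < 1)
    (N : ℕ) (hN : N = Fintype.card V)
    (dout : V → ℕ) (hdout : ∀ i, dout i = (E.filter (fun e => e.1 = i)).card)
    (P : V → Finset V) (hP : ∀ j, P j = Finset.univ.filter (fun i => (i, j) ∈ E))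
    (din : V → ℕ) (hdin : ∀ j, din j = (P j).card)
    (hdin_pos : ∀ j, 1 ≤ din j)
    (F : V → ℝ)
    (D : V × V → ℝ)
    (hD : ∀ e ∈ E, D e = F e.1 / (dout e.1 : ℝ) - F e.2 / (γ * (din e.2 : ℝ))) :
    ∑ j : V, (γ * ∑ i ∈ P j, F i / (dout i : ℝ) + (1 - γ) / (N : ℝ) - F j) ^ 2 ≤
      ∑ e ∈ E, ((din e.2 : ℝ) * γ ^ 2 * (D e) ^ 2
        + (2 * γ * (1 - γ) / (N : ℝ)) * D e
        + (1 - γ) ^ 2 / ((din e.2 : ℝ) * (N : ℝ) ^ 2)) := by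
  have hNpos : (0:ℝ) < N := by
    rw [hN]; exact_mod_cast Fintype.card_pos
  have hγne : γ ≠ 0 := ne_of_gt hγ0
  have hmem : ∀ j i, i ∈ P j ↔ (i, j) ∈ E := by
    intro j i; rw [hP]; simp
  set g : V × V → ℝ := fun e => (din e.2 : ℝ) * γ ^ 2 * (D e) ^ 2
        + (2 * γ * (1 - γ) / (N : ℝ)) * D e
        + (1 - γ) ^ 2 / ((din e.2 : ℝ) * (N : ℝ) ^ 2) with hg
  have hRHS : ∑ e ∈ E, g e = ∑ j : V, ∑ i ∈ P j, g (i, j) := by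
    rw [← Finset.sum_fiberwise_of_maps_to (g := fun e => e.2)
      (fun e _ => Finset.mem_univ e.2) g]
    refine Finset.sum_congr rfl fun j _ => ?_
    refine Finset.sum_nbij' (fun e => e.1) (fun i => (i, j)) ?_ ?_ ?_ ?_ ?_
    · intro e he
      simp only [Finset.mem_filter] at he
      rw [hmem]
      have : (e.1, j) = e := by rw [← he.2]
      rw [this]; exact he.1
    · intro i hi
      simp only [Finset.mem_filter]
      exact ⟨(hmem j i).1 hi, trivial⟩
    · intro e he
      simp only [Finset.mem_filter] at he
      exact Prod.ext rfl he.2.symm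
    · intro i hi; rfl
    · intro e he
      simp only [Finset.mem_filter] at he
      rw [show ((e.1 : V), j) = e from Prod.ext rfl he.2.symm]
  rw [hRHS]
  refine Finset.sum_le_sum fun j _ => ?_
  have hdinpos : (0:ℝ) < din j := by exact_mod_cast hdin_pos j
  set a : V → ℝ := fun i => γ * D (i, j) + (1 - γ) / ((din j : ℝ) * N) with ha
  have hLHS : γ * ∑ i ∈ P j, F i / (dout i : ℝ) + (1 - γ) / (N : ℝ) - F j
      = ∑ i ∈ P j, a i := by
    rw [Finset.sum_add_distrib, ← Finset.mul_sum]
    have hDsum : ∑ i ∈ P j, D (i, j)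
        = (∑ i ∈ P j, F i / (dout i : ℝ)) - F j / γ := by
      have : ∀ i ∈ P j, D (i, j)
          = F i / (dout i : ℝ) - F j / (γ * (din j : ℝ)) := fun i hi =>
        hD (i, j) ((hmem j i).1 hi)
      rw [Finset.sum_congr rfl this, Finset.sum_sub_distrib, Finset.sum_const,
        ← hdin j, nsmul_eq_mul]
      field_simp
    rw [hDsum, Finset.sum_const, ← hdin j, nsmul_eq_mul]
    field_simp
    ring
  rw [hLHS]
  calc (∑ i ∈ P j, a i) ^ 2 ≤ (P j).card * ∑ i ∈ P j, a i ^ 2 :=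
        sq_sum_le_card_mul_sum_sq
    _ = ∑ i ∈ P j, (din j : ℝ) * a i ^ 2 := by
        rw [Finset.mul_sum, hdin j]
    _ = ∑ i ∈ P j, g (i, j) := by
        refine Finset.sum_congr rfl fun i hi => ?_
        simp only [hg, ha]
        have hNne : (N:ℝ) ≠ 0 := ne_of_gt hNpos
        have hdne : (din j : ℝ) ≠ 0 := ne_of_gt hdinpos
        field_simp
        ring
end

section
/- Let γ be a real number with 0 < γ < 1, let N ≥ 2 be a natural number, let d_in and d_out be natural numbers with 1 ≤ d_in ≤ N−1 and 1 ≤ d_out ≤ N−1, let a and b be real numbers with 0 ≤ a ≤ 1 and 0 ≤ b ≤ 1, let P ≥ 0 be real, and let g and h be vectors in a real normed vector space with ‖g‖ ≤ P and ‖h‖ ≤ P. Define the scalar c = 2·d_in·γ²·a/d_out − 2γ·b + 2γ(1−γ)/N and the vector u = c • ( (1/d_out) • g − (1/(d_in·γ)) • h ). Then ‖u‖ ≤ M·P, where M = (2(N−1)γ² + 2γ + 2γ(1−γ)/N)·(1 + 1/γ). -/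
set_option maxHeartbeats 1000000 in
/-- Lemma 4 (abstract form): bound on the norm of the per-edge loss gradient. -/
theorem per_edge_gradient_bound
    {V : Type*} [NormedAddCommGroup V] [NormedSpace ℝ V]
    (γ : ℝ) (hγ0 : 0 < γ) (hγ1 : γ < 1)
    (N : ℕ) (hN : 2 ≤ N)
    (din dout : ℕ)
    (hdin1 : 1 ≤ din) (hdin2 : (din : ℝ) ≤ (N : ℝ) - 1)
    (hdout1 : 1 ≤ dout) (hdout2 : (dout : ℝ) ≤ (N : ℝ) - 1)
    (a b : ℝ) (ha0 : 0 ≤ a) (ha1 : a ≤ 1) (hb0 : 0 ≤ b) (hb1 : b ≤ 1)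
    (P : ℝ) (hP : 0 ≤ P)
    (g h : V) (hg : ‖g‖ ≤ P) (hh : ‖h‖ ≤ P)
    (c : ℝ) (hc : c = 2 * (din : ℝ) * γ ^ 2 * a / (dout : ℝ) - 2 * γ * b + 2 * γ * (1 - γ) / (N : ℝ))
    (u : V) (hu : u = c • ((1 / (dout : ℝ)) • g - (1 / ((din : ℝ) * γ)) • h))
    (M : ℝ) (hM : M = (2 * ((N : ℝ) - 1) * γ ^ 2 + 2 * γ + 2 * γ * (1 - γ) / (N : ℝ)) * (1 + 1 / γ)) :
    ‖u‖ ≤ M * P := by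
  have hN0 : (0 : ℝ) < (N : ℝ) := by positivity
  have hdin0 : (1 : ℝ) ≤ (din : ℝ) := by exact_mod_cast hdin1
  have hdout0 : (1 : ℝ) ≤ (dout : ℝ) := by exact_mod_cast hdout1
  have hdinpos : (0 : ℝ) < (din : ℝ) := lt_of_lt_of_le one_pos hdin0
  have hdoutpos : (0 : ℝ) < (dout : ℝ) := lt_of_lt_of_le one_pos hdout0
  set C : ℝ := 2 * ((N : ℝ) - 1) * γ ^ 2 + 2 * γ + 2 * γ * (1 - γ) / (N : ℝ) with hC
  -- bound |c| ≤ C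
  have h1 : 0 ≤ 2 * (din : ℝ) * γ ^ 2 * a / (dout : ℝ) := by positivity
  have h1' : 2 * (din : ℝ) * γ ^ 2 * a / (dout : ℝ) ≤ 2 * ((N : ℝ) - 1) * γ ^ 2 := by
    rw [div_le_iff₀ hdoutpos]
    have s1 : 2 * (din : ℝ) * γ ^ 2 * a ≤ 2 * (din : ℝ) * γ ^ 2 :=
      mul_le_of_le_one_right (by positivity) ha1
    have s2 : 2 * (din : ℝ) * γ ^ 2 ≤ 2 * ((N : ℝ) - 1) * γ ^ 2 := by
      nlinarith [sq_nonneg γ]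
    have s3 : 2 * ((N : ℝ) - 1) * γ ^ 2 ≤ 2 * ((N : ℝ) - 1) * γ ^ 2 * (dout : ℝ) :=
      le_mul_of_one_le_right (by nlinarith [sq_nonneg γ]) hdout0
    linarith
  have h3 : 0 ≤ 2 * γ * b ∧ 2 * γ * b ≤ 2 * γ := by
    constructor <;> nlinarith
  have h4 : 0 ≤ 2 * γ * (1 - γ) / (N : ℝ) :=
    div_nonneg (by nlinarith) (le_of_lt hN0)
  have hT1 : 0 ≤ 2 * ((N : ℝ) - 1) * γ ^ 2 := by nlinarith [sq_nonneg γ]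
  have hT2 : 0 ≤ 2 * γ := by linarith
  have hcC : |c| ≤ C := by
    rw [hc, hC, abs_le]
    exact ⟨by linarith [h3.1, h3.2], by linarith [h3.1, h3.2]⟩
  have hCpos : 0 ≤ C := le_trans (abs_nonneg c) hcC
  -- norm bound
  have hnorm : ‖(1 / (dout : ℝ)) • g - (1 / ((din : ℝ) * γ)) • h‖ ≤ (1 + 1 / γ) * P := by
    calc ‖(1 / (dout : ℝ)) • g - (1 / ((din : ℝ) * γ)) • h‖
        ≤ ‖(1 / (dout : ℝ)) • g‖ + ‖(1 / ((din : ℝ) * γ)) • h‖ := norm_sub_le _ _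
      _ = (1 / (dout : ℝ)) * ‖g‖ + (1 / ((din : ℝ) * γ)) * ‖h‖ := by
          rw [norm_smul, norm_smul, Real.norm_eq_abs, Real.norm_eq_abs,
            abs_of_nonneg (by positivity), abs_of_nonneg (by positivity)]
      _ ≤ 1 * P + (1 / γ) * P := by
          have e1 : (1 / (dout : ℝ)) * ‖g‖ ≤ 1 * P :=
            mul_le_mul (by rw [div_le_one hdoutpos]; exact hdout0) hg (norm_nonneg _)
              one_pos.le
          have e2 : (1 / ((din : ℝ) * γ)) * ‖h‖ ≤ (1 / γ) * P := by
            apply mul_le_mul _ hh (norm_nonneg _) (by positivity)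
            rw [div_le_div_iff₀ (by positivity) hγ0]
            nlinarith
          linarith
      _ = (1 + 1 / γ) * P := by ring
  rw [hu, norm_smul, Real.norm_eq_abs, hM]
  calc |c| * ‖(1 / (dout : ℝ)) • g - (1 / ((din : ℝ) * γ)) • h‖
      ≤ C * ((1 + 1 / γ) * P) := by
        apply mul_le_mul hcC hnorm (norm_nonneg _) hCpos
    _ = C * (1 + 1 / γ) * P := by ring
end

section
/- Let (X, 𝒜) and (Y, ℬ) be measurable spaces, let μ₁, ν₁ be probability measures on X and μ₂, ν₂ be probability measures on Y, and let ε₁, ε₂, δ₁, δ₂ ≥ 0 be real numbers. Suppose that for every measurable set A ⊆ X, μ₁(A) ≤ exp(ε₁)·ν₁(A) + δ₁, and for every measurable set B ⊆ Y, μ₂(B) ≤ exp(ε₂)·ν₂(B) + δ₂. Then for every measurable set C ⊆ X × Y, (μ₁ ⊗ μ₂)(C) ≤ exp(ε₁ + ε₂)·(ν₁ ⊗ ν₂)(C) + δ₁ + δ₂, where ⊗ denotes the product measure. -/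
open MeasureTheory

open scoped ENNReal

/-- Key lemma: the set-level `(ε, δ)` domination between two probability measures
upgrades to a domination of Lebesgue integrals of `[0,1]`-valued functions,
via the layer-cake formula. -/
lemma dp_lintegral_le {X : Type*} [MeasurableSpace X] (μ ν : Measure X)
    (ε δ : ℝ) (hδ : 0 ≤ δ)
    (h : ∀ A : Set X, MeasurableSet A →
      μ A ≤ ENNReal.ofReal (Real.exp ε) * ν A + ENNReal.ofReal δ)
    (g : X → ℝ≥0∞) (hg : Measurable g) (hg1 : ∀ x, g x ≤ 1) :
    ∫⁻ x, g x ∂μ ≤ ENNReal.ofReal (Real.exp ε) * ∫⁻ x, g x ∂ν + ENNReal.ofReal δ := by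
  set f : X → ℝ := fun x => (g x).toReal with hf
  have hfm : Measurable f := hg.ennreal_toReal
  have hf0 : ∀ x, 0 ≤ f x := fun x => ENNReal.toReal_nonneg
  have hgne : ∀ x, g x ≠ ∞ := fun x => (lt_of_le_of_lt (hg1 x) ENNReal.one_lt_top).ne
  have hgf : ∀ x, ENNReal.ofReal (f x) = g x := fun x => ENNReal.ofReal_toReal (hgne x)
  have hf1 : ∀ x, f x ≤ 1 := by
    intro x
    have := ENNReal.toReal_mono ENNReal.one_ne_top (hg1 x)
    simpa using this
  have keyμ : ∫⁻ x, g x ∂μ = ∫⁻ t in Set.Ioi (0:ℝ), μ {a | t < f a} := by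
    rw [← lintegral_eq_lintegral_meas_lt μ (Filter.Eventually.of_forall hf0) hfm.aemeasurable]
    simp_rw [hgf]
  have keyν : ∫⁻ x, g x ∂ν = ∫⁻ t in Set.Ioi (0:ℝ), ν {a | t < f a} := by
    rw [← lintegral_eq_lintegral_meas_lt ν (Filter.Eventually.of_forall hf0) hfm.aemeasurable]
    simp_rw [hgf]
  have hmeas : ∀ t : ℝ, MeasurableSet {a | t < f a} := fun t =>
    measurableSet_lt measurable_const hfm
  have pointwise : ∀ t : ℝ,
      μ {a | t < f a} ≤ ENNReal.ofReal (Real.exp ε) * ν {a | t < f a}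
        + (Set.Iio (1:ℝ)).indicator (fun _ => ENNReal.ofReal δ) t := by
    intro t
    by_cases ht : t < 1
    · rw [Set.indicator_of_mem (by simpa using ht)]
      exact h _ (hmeas t)
    · have hempty : {a | t < f a} = ∅ := by
        ext a
        simp only [Set.mem_setOf_eq, Set.mem_empty_iff_false, iff_false, not_lt]
        exact (hf1 a).trans (not_lt.mp ht)
      rw [hempty]
      simp
  calc ∫⁻ x, g x ∂μ = ∫⁻ t in Set.Ioi (0:ℝ), μ {a | t < f a} := keyμ
    _ ≤ ∫⁻ t in Set.Ioi (0:ℝ), (ENNReal.ofReal (Real.exp ε) * ν {a | t < f a}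
          + (Set.Iio (1:ℝ)).indicator (fun _ => ENNReal.ofReal δ) t) :=
        lintegral_mono fun t => pointwise t
    _ = (∫⁻ t in Set.Ioi (0:ℝ), ENNReal.ofReal (Real.exp ε) * ν {a | t < f a})
          + ∫⁻ t in Set.Ioi (0:ℝ), (Set.Iio (1:ℝ)).indicator (fun _ => ENNReal.ofReal δ) t :=
        lintegral_add_right _ (measurable_const.indicator measurableSet_Iio)
    _ ≤ ENNReal.ofReal (Real.exp ε) * ∫⁻ x, g x ∂ν + ENNReal.ofReal δ := by
        gcongr
        · rw [lintegral_const_mul' _ _ ENNReal.ofReal_ne_top, keyν]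
        · rw [lintegral_indicator measurableSet_Iio, setLIntegral_const,
            Measure.restrict_apply measurableSet_Iio, Set.Iio_inter_Ioi, Real.volume_Ioo]
          simp

/-- Theorem 4 (sequential composition of differential privacy), stated for
independent (product) composition of output distributions. -/
theorem dp_sequential_composition
    {X Y : Type*} [MeasurableSpace X] [MeasurableSpace Y]
    (μ₁ ν₁ : Measure X) (μ₂ ν₂ : Measure Y)
    [IsProbabilityMeasure μ₁] [IsProbabilityMeasure ν₁]
    [IsProbabilityMeasure μ₂] [IsProbabilityMeasure ν₂]
    (ε₁ ε₂ δ₁ δ₂ : ℝ) (hε₁ : 0 ≤ ε₁) (hε₂ : 0 ≤ ε₂) (hδ₁ : 0 ≤ δ₁) (hδ₂ : 0 ≤ δ₂)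
    (h₁ : ∀ A : Set X, MeasurableSet A →
      μ₁ A ≤ ENNReal.ofReal (Real.exp ε₁) * ν₁ A + ENNReal.ofReal δ₁)
    (h₂ : ∀ B : Set Y, MeasurableSet B →
      μ₂ B ≤ ENNReal.ofReal (Real.exp ε₂) * ν₂ B + ENNReal.ofReal δ₂) :
    ∀ C : Set (X × Y), MeasurableSet C →
      (μ₁.prod μ₂) C ≤
        ENNReal.ofReal (Real.exp (ε₁ + ε₂)) * (ν₁.prod ν₂) C
          + ENNReal.ofReal δ₁ + ENNReal.ofReal δ₂ := by
  intro C hC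
  set g : X → ℝ≥0∞ :=
    fun x => min 1 (ENNReal.ofReal (Real.exp ε₂) * ν₂ (Prod.mk x ⁻¹' C)) with hgdef
  have hgm : Measurable g :=
    measurable_const.min ((measurable_measure_prodMk_left hC).const_mul _)
  have hg1 : ∀ x, g x ≤ 1 := fun x => min_le_left _ _
  have step1 : ∀ x, μ₂ (Prod.mk x ⁻¹' C) ≤ g x + ENNReal.ofReal δ₂ := by
    intro x
    have hCx : MeasurableSet (Prod.mk x ⁻¹' C) := measurable_prodMk_left hC
    have hle : μ₂ (Prod.mk x ⁻¹' C)
        ≤ min 1 (ENNReal.ofReal (Real.exp ε₂) * ν₂ (Prod.mk x ⁻¹' C) + ENNReal.ofReal δ₂) :=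
      le_min prob_le_one (h₂ _ hCx)
    refine hle.trans ?_
    rcases le_total (1:ℝ≥0∞) (ENNReal.ofReal (Real.exp ε₂) * ν₂ (Prod.mk x ⁻¹' C)) with hc | hc
    · calc min 1 (ENNReal.ofReal (Real.exp ε₂) * ν₂ (Prod.mk x ⁻¹' C) + ENNReal.ofReal δ₂)
          ≤ 1 := min_le_left _ _
        _ ≤ g x + ENNReal.ofReal δ₂ := by
            rw [hgdef]; exact le_add_right (le_min le_rfl hc)
    · calc min 1 (ENNReal.ofReal (Real.exp ε₂) * ν₂ (Prod.mk x ⁻¹' C) + ENNReal.ofReal δ₂)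
          ≤ ENNReal.ofReal (Real.exp ε₂) * ν₂ (Prod.mk x ⁻¹' C) + ENNReal.ofReal δ₂ :=
            min_le_right _ _
        _ ≤ g x + ENNReal.ofReal δ₂ := by
            gcongr
            rw [hgdef]
            exact le_min hc le_rfl
  have step2 : ∫⁻ x, g x ∂ν₁ ≤ ENNReal.ofReal (Real.exp ε₂) * (ν₁.prod ν₂) C := by
    calc ∫⁻ x, g x ∂ν₁
        ≤ ∫⁻ x, ENNReal.ofReal (Real.exp ε₂) * ν₂ (Prod.mk x ⁻¹' C) ∂ν₁ :=
          lintegral_mono fun x => min_le_right _ _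
      _ = ENNReal.ofReal (Real.exp ε₂) * ∫⁻ x, ν₂ (Prod.mk x ⁻¹' C) ∂ν₁ :=
          lintegral_const_mul' _ _ ENNReal.ofReal_ne_top
      _ = ENNReal.ofReal (Real.exp ε₂) * (ν₁.prod ν₂) C := by
          rw [Measure.prod_apply hC]
  have key := dp_lintegral_le μ₁ ν₁ ε₁ δ₁ hδ₁ h₁ g hgm hg1
  calc (μ₁.prod μ₂) C = ∫⁻ x, μ₂ (Prod.mk x ⁻¹' C) ∂μ₁ := Measure.prod_apply hC
    _ ≤ ∫⁻ x, (g x + ENNReal.ofReal δ₂) ∂μ₁ := lintegral_mono step1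
    _ = (∫⁻ x, g x ∂μ₁) + ENNReal.ofReal δ₂ := by
        rw [lintegral_add_right _ measurable_const, lintegral_const, measure_univ, mul_one]
    _ ≤ (ENNReal.ofReal (Real.exp ε₁) * ∫⁻ x, g x ∂ν₁ + ENNReal.ofReal δ₁)
          + ENNReal.ofReal δ₂ := by gcongr
    _ ≤ (ENNReal.ofReal (Real.exp ε₁) * (ENNReal.ofReal (Real.exp ε₂) * (ν₁.prod ν₂) C)
          + ENNReal.ofReal δ₁) + ENNReal.ofReal δ₂ := by gcongr
    _ = ENNReal.ofReal (Real.exp (ε₁ + ε₂)) * (ν₁.prod ν₂) C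
          + ENNReal.ofReal δ₁ + ENNReal.ofReal δ₂ := by
        rw [← mul_assoc, ← ENNReal.ofReal_mul (Real.exp_nonneg _), ← Real.exp_add]
end

section
/- Let ε and δ be real numbers with 0 < ε ≤ 1 and 0 < δ < 1, let S > 0 be real, and set σ = S·√(2·log(1.25/δ))/ε. Let a, b ∈ ℝ with |a − b| ≤ S. Then for every measurable set O ⊆ ℝ, 𝒩(a, σ²)(O) ≤ exp(ε)·𝒩(b, σ²)(O) + δ, where 𝒩(m, σ²) denotes the Gaussian probability measure on ℝ with mean m and variance σ². -/
/-! For `a > b` and `d = a - b`, the privacy loss `log (p_a x / p_b x) = d (2x - a - b) / (2σ²)`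
is at most `ε` left of `θ = a + σ²ε/d - d/2`, so there the density of `𝒩(a, σ²)` is at most
`e^ε` times that of `𝒩(b, σ²)`. The remaining mass `𝒩(a, σ²)(θ, ∞)` is at most the tail of a
centred Gaussian beyond `σ²ε/S - S/2 = σ t`, where `c = √(2 log (1.25/δ))`, `t = c - ε/(2c)`, and
`δ = 1.25 e^{-c²/2}`. If `t ≥ 0`, the tail is at most `e^{-t²/2}/2` and `t² ≥ c² - ε ≥ c² - 1`,
giving at most `e^{1/2} e^{-c²/2}/2 ≤ δ`. If `t < 0`, then `c² < ε/2 ≤ 1/2`, hence `δ ≥ 15/16`,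
while `δ < 1` gives `c² > 2/5` and `|t| ≤ 1/6`; the tail is at most `1/2 + |t|/√(2π) ≤ 2/3`.
The case `a < b` follows by reflecting `x ↦ -x`.
-/

open MeasureTheory ProbabilityTheory Real Set
open scoped ENNReal NNReal

namespace ProbabilityTheory

variable {v : ℝ≥0}

lemma gaussianPDFReal_eq_exp_mul (a b : ℝ) (v : ℝ≥0) (x : ℝ) :
    gaussianPDFReal a v x =
      exp (((x - b) ^ 2 - (x - a) ^ 2) / (2 * v)) * gaussianPDFReal b v x := by
  simp only [gaussianPDFReal]
  rw [mul_left_comm, ← exp_add]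
  congr 2
  ring

lemma gaussianPDFReal_le_inv_sqrt (μ : ℝ) (v : ℝ≥0) (x : ℝ) :
    gaussianPDFReal μ v x ≤ (√(2 * π * v))⁻¹ := by
  rw [gaussianPDFReal]
  refine mul_le_of_le_one_right (by positivity) (exp_le_one_iff.mpr ?_)
  exact div_nonpos_of_nonpos_of_nonneg (neg_nonpos.mpr (sq_nonneg _)) (by positivity)

lemma gaussianReal_le_ofReal_mul_of_pdf_le {a b c : ℝ} (hv : v ≠ 0) {s : Set ℝ}
    (h : ∀ x ∈ s, gaussianPDFReal a v x ≤ c * gaussianPDFReal b v x) :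
    gaussianReal a v s ≤ ENNReal.ofReal c * gaussianReal b v s := by
  rw [gaussianReal_apply a hv, gaussianReal_apply b hv,
    ← lintegral_const_mul _ (measurable_gaussianPDF b v)]
  refine setLIntegral_mono ((measurable_gaussianPDF b v).const_mul _) fun x hx ↦ ?_
  rw [gaussianPDF, gaussianPDF, ← ENNReal.ofReal_mul' (gaussianPDFReal_nonneg b v x)]
  exact ENNReal.ofReal_le_ofReal (h x hx)

lemma gaussianReal_le_ofReal_mul_volume (μ : ℝ) (hv : v ≠ 0) (s : Set ℝ) :
    gaussianReal μ v s ≤ ENNReal.ofReal (√(2 * π * v))⁻¹ * volume s := by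
  rw [gaussianReal_apply μ hv, ← setLIntegral_const]
  exact setLIntegral_mono measurable_const fun x _ ↦
    ENNReal.ofReal_le_ofReal (gaussianPDFReal_le_inv_sqrt μ v x)

lemma gaussianReal_Ioi (μ : ℝ) (v : ℝ≥0) (r : ℝ) :
    gaussianReal μ v (Ioi r) = gaussianReal 0 v (Ioi (r - μ)) := by
  rw [← zero_add μ, ← gaussianReal_map_add_const, Measure.map_apply (measurable_add_const μ)
    measurableSet_Ioi, zero_add]
  congr 1
  ext x
  simp [sub_lt_iff_lt_add]

lemma gaussianReal_neg_preimage (μ : ℝ) (v : ℝ≥0) {s : Set ℝ} (hs : MeasurableSet s) :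
    gaussianReal (-μ) v (Neg.neg ⁻¹' s) = gaussianReal μ v s := by
  rw [← gaussianReal_map_neg, Measure.map_apply measurable_neg (hs.preimage measurable_neg)]
  simp

lemma gaussianReal_zero_Ioi_zero (hv : v ≠ 0) : gaussianReal 0 v (Ioi 0) = 2⁻¹ := by
  have := nullSingletonClass_gaussianReal (μ := 0) hv
  have hsymm : gaussianReal 0 v (Iic 0) = gaussianReal 0 v (Ioi 0) := by
    rw [← measure_congr Iio_ae_eq_Iic, ← gaussianReal_neg_preimage 0 v measurableSet_Ioi]
    simp
  refine ENNReal.eq_inv_of_mul_eq_one_left ?_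
  nth_rw 1 [mul_two, ← hsymm]
  rw [← measure_union (Iic_disjoint_Ioi le_rfl) measurableSet_Ioi,
    Iic_union_Ioi, measure_univ]

lemma gaussianReal_zero_Ioi_le_of_nonneg (hv : v ≠ 0) {r : ℝ} (hr : 0 ≤ r) :
    gaussianReal 0 v (Ioi r) ≤ ENNReal.ofReal (exp (-r ^ 2 / (2 * v)) / 2) := by
  have hpdf : ∀ x ∈ Ioi (0 : ℝ),
      gaussianPDFReal (-r) v x ≤ exp (-r ^ 2 / (2 * v)) * gaussianPDFReal 0 v x := by
    intro x hx
    rw [gaussianPDFReal_eq_exp_mul (-r) 0]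
    refine mul_le_mul_of_nonneg_right (exp_le_exp.mpr ?_) (gaussianPDFReal_nonneg 0 v x)
    gcongr
    nlinarith [mem_Ioi.mp hx]
  calc gaussianReal 0 v (Ioi r) = gaussianReal (-r) v (Ioi 0) := by
        rw [gaussianReal_Ioi (-r), zero_sub, neg_neg]
    _ ≤ ENNReal.ofReal (exp (-r ^ 2 / (2 * v))) * 2⁻¹ := by
        rw [← gaussianReal_zero_Ioi_zero hv]
        exact gaussianReal_le_ofReal_mul_of_pdf_le hv hpdf
    _ = ENNReal.ofReal (exp (-r ^ 2 / (2 * v)) / 2) := by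
        rw [ENNReal.ofReal_div_of_pos two_pos, ENNReal.ofReal_ofNat, ENNReal.div_eq_inv_mul,
          mul_comm]

lemma gaussianReal_zero_Ioi_le_of_nonpos (hv : v ≠ 0) {r : ℝ} (hr : r ≤ 0) :
    gaussianReal 0 v (Ioi r) ≤ ENNReal.ofReal (1 / 2 + -r / √(2 * π * v)) := by
  calc gaussianReal 0 v (Ioi r)
      ≤ gaussianReal 0 v (Ioc r 0) + gaussianReal 0 v (Ioi 0) := by
        rw [← Ioc_union_Ioi_eq_Ioi hr]
        exact measure_union_le _ _
    _ ≤ ENNReal.ofReal (√(2 * π * v))⁻¹ * ENNReal.ofReal (-r) + 2⁻¹ := by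
        rw [gaussianReal_zero_Ioi_zero hv, ← zero_sub r, ← Real.volume_Ioc]
        gcongr
        exact gaussianReal_le_ofReal_mul_volume 0 hv _
    _ = ENNReal.ofReal (1 / 2 + -r / √(2 * π * v)) := by
        rw [add_comm,
          ENNReal.ofReal_add (by norm_num) (div_nonneg (by linarith) (by positivity)),
          ← ENNReal.ofReal_mul (by positivity), one_div, ENNReal.ofReal_inv_of_pos two_pos,
          ENNReal.ofReal_ofNat, inv_mul_eq_div]

lemma gaussianReal_le_exp_mul_add_tail_of_lt (hv : v ≠ 0) {ε S a b : ℝ} (hε : 0 ≤ ε)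
    (hba : b < a) (hS : a - b ≤ S) (O : Set ℝ) :
    gaussianReal a v O ≤ ENNReal.ofReal (exp ε) * gaussianReal b v O
      + gaussianReal 0 v (Ioi (v * ε / S - S / 2)) := by
  set d := a - b with hd_def
  have hd : 0 < d := sub_pos.mpr hba
  set θ := a + (v * ε / d - d / 2) with hθ
  have hloss : ∀ x ∈ O ∩ Iic θ, gaussianPDFReal a v x ≤ exp ε * gaussianPDFReal b v x := by
    intro x hx
    rw [gaussianPDFReal_eq_exp_mul a b]
    refine mul_le_mul_of_nonneg_right (exp_le_exp.mpr ?_) (gaussianPDFReal_nonneg b v x)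
    have : d * (2 * x - a - b) ≤ d * (2 * (v * ε / d)) := by
      gcongr
      linarith [mem_Iic.mp hx.2, hθ, hd_def]
    rw [mul_left_comm, mul_div_cancel₀ _ hd.ne'] at this
    rw [div_le_iff₀ (by positivity)]
    linarith
  have htail : v * ε / S - S / 2 ≤ θ - a := by
    have : v * ε / S ≤ v * ε / d := by gcongr
    linarith [hθ]
  calc gaussianReal a v O ≤ gaussianReal a v (O ∩ Iic θ) + gaussianReal a v (Ioi θ) :=
        (measure_mono fun x hx ↦ (le_or_gt x θ).imp (⟨hx, ·⟩) id).trans (measure_union_le _ _)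
    _ ≤ ENNReal.ofReal (exp ε) * gaussianReal b v O
          + gaussianReal 0 v (Ioi (v * ε / S - S / 2)) := by
        refine add_le_add ((gaussianReal_le_ofReal_mul_of_pdf_le hv hloss).trans ?_) ?_
        · gcongr
          exact inter_subset_left
        · rw [gaussianReal_Ioi]
          exact measure_mono (Ioi_subset_Ioi htail)

lemma gaussianReal_le_exp_mul_add_tail (hv : v ≠ 0) {ε S a b : ℝ} (hε : 0 ≤ ε)
    (hab : |a - b| ≤ S) {O : Set ℝ} (hO : MeasurableSet O) :
    gaussianReal a v O ≤ ENNReal.ofReal (exp ε) * gaussianReal b v O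
      + gaussianReal 0 v (Ioi (v * ε / S - S / 2)) := by
  rcases lt_trichotomy b a with hba | rfl | hab'
  · exact gaussianReal_le_exp_mul_add_tail_of_lt hv hε hba ((le_abs_self _).trans hab) O
  · refine le_trans ?_ le_self_add
    exact le_mul_of_one_le_left' (ENNReal.one_le_ofReal.mpr (one_le_exp hε))
  · rw [← gaussianReal_neg_preimage a v hO, ← gaussianReal_neg_preimage b v hO]
    refine gaussianReal_le_exp_mul_add_tail_of_lt hv hε (neg_lt_neg hab') ?_ _
    rw [abs_sub_comm] at hab
    linarith [le_abs_self (b - a)]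

end ProbabilityTheory

namespace Real

lemma sqrt_two_mul_log_div_pos {k δ : ℝ} (hδ0 : 0 < δ) (hδk : δ < k) :
    0 < √(2 * log (k / δ)) :=
  sqrt_pos.mpr (mul_pos two_pos (log_pos ((one_lt_div hδ0).mpr hδk)))

lemma exp_neg_sq_sub_div_div_two_le {c ε : ℝ} (hc : 0 < c) (hε : ε ≤ 1) :
    exp (-(c - ε / (2 * c)) ^ 2 / 2) / 2 ≤ 1.25 * exp (-c ^ 2 / 2) := by
  have hsq : c ^ 2 - 1 ≤ (c - ε / (2 * c)) ^ 2 := by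
    have : (c - ε / (2 * c)) ^ 2 = c ^ 2 - ε + (ε / (2 * c)) ^ 2 := by field_simp; ring
    nlinarith [sq_nonneg (ε / (2 * c))]
  have hhalf : exp (1 / 2) ≤ 2 := by
    have := exp_bound_div_one_sub_of_interval (x := 1 / 2) (by norm_num) (by norm_num)
    norm_num at this
    exact this
  calc exp (-(c - ε / (2 * c)) ^ 2 / 2) / 2 ≤ exp (1 / 2 + -c ^ 2 / 2) / 2 := by
        gcongr
        linarith
    _ ≤ 1.25 * exp (-c ^ 2 / 2) := by
        rw [exp_add]
        nlinarith [exp_pos (-c ^ 2 / 2)]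

lemma one_half_add_neg_sub_div_div_sqrt_le {c ε : ℝ} (hc : 0 < c) (hε : ε ≤ 1)
    (ht : c - ε / (2 * c) < 0) (hδ : 1.25 * exp (-c ^ 2 / 2) < 1) :
    1 / 2 + -(c - ε / (2 * c)) / √(2 * π) ≤ 1.25 * exp (-c ^ 2 / 2) := by
  have hc_lo : 2 / 5 ≤ c ^ 2 := by
    by_contra! h
    have h5 : exp (1 / 5) ≤ 5 / 4 := by
      have := exp_bound_div_one_sub_of_interval (x := 1 / 5) (by norm_num) (by norm_num)
      norm_num at this
      exact this
    have hinv : exp (-(1 / 5)) * exp (1 / 5) = 1 := by rw [← exp_add, neg_add_cancel, exp_zero]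
    have hmono : exp (-(1 / 5)) < exp (-c ^ 2 / 2) := exp_lt_exp.mpr (by linarith)
    nlinarith [exp_pos (-(1 / 5))]
  have hc_hi : 2 * c ^ 2 < 1 := by
    have := (sub_neg.mp ht)
    rw [lt_div_iff₀ (by positivity)] at this
    nlinarith
  have hδ_lo : 15 / 16 ≤ 1.25 * exp (-c ^ 2 / 2) := by
    nlinarith [add_one_le_exp (-c ^ 2 / 2)]
  have ht_lo : -(c - ε / (2 * c)) ≤ 1 / 6 := by
    have : ε / (2 * c) ≤ 1 / (2 * c) := by gcongr
    have : 1 / (2 * c) - c ≤ 1 / 6 := by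
      rw [div_sub' (by positivity), div_le_div_iff₀ (by positivity) (by norm_num)]
      nlinarith [sq_nonneg (c - 3 / 5)]
    linarith
  have hπ : 1 ≤ √(2 * π) := one_le_sqrt.mpr (by linarith [pi_gt_three])
  have : -(c - ε / (2 * c)) / √(2 * π) ≤ 1 / 6 :=
    (div_le_self (by linarith) hπ).trans ht_lo
  linarith

end Real

lemma gaussianReal_zero_Ioi_le_of_gaussian_mechanism {ε δ S σ : ℝ} (hε0 : 0 < ε)
    (hε1 : ε ≤ 1) (hδ0 : 0 < δ) (hδ1 : δ < 1) (hS : 0 < S)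
    (hσ : σ = S * √(2 * log (1.25 / δ)) / ε) :
    gaussianReal 0 (σ ^ 2).toNNReal (Ioi ((σ ^ 2).toNNReal * ε / S - S / 2))
      ≤ ENNReal.ofReal δ := by
  set c := √(2 * log (1.25 / δ)) with hc_def
  have hc : 0 < c := sqrt_two_mul_log_div_pos hδ0 (by linarith)
  have hδc : δ = 1.25 * exp (-c ^ 2 / 2) := by
    rw [hc_def, sq_sqrt (sqrt_pos.mp hc).le, neg_div, mul_div_cancel_left₀ _ two_ne_zero,
      exp_neg, exp_log (by positivity)]
    field_simp
  have hσ0 : 0 < σ := hσ ▸ div_pos (mul_pos hS hc) hε0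
  set v := (σ ^ 2).toNNReal
  have hv : (v : ℝ) = σ ^ 2 := Real.coe_toNNReal _ (sq_nonneg σ)
  have hv0 : v ≠ 0 := by rw [← NNReal.coe_ne_zero, hv]; positivity
  set t := c - ε / (2 * c) with ht_def
  have hr : v * ε / S - S / 2 = σ * t := by rw [hv, hσ, ht_def]; field_simp
  rw [hr]
  rcases le_or_gt 0 t with ht | ht
  · refine (gaussianReal_zero_Ioi_le_of_nonneg hv0 (mul_nonneg hσ0.le ht)).trans
      (ENNReal.ofReal_le_ofReal ?_)
    have : -(σ * t) ^ 2 / (2 * v) = -t ^ 2 / 2 := by rw [hv]; field_simp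
    rw [this, hδc]
    exact exp_neg_sq_sub_div_div_two_le hc hε1
  · refine (gaussianReal_zero_Ioi_le_of_nonpos hv0
      (mul_nonpos_of_nonneg_of_nonpos hσ0.le ht.le)).trans (ENNReal.ofReal_le_ofReal ?_)
    have : -(σ * t) / √(2 * π * v) = -t / √(2 * π) := by
      rw [hv, mul_comm (2 * π), sqrt_mul (sq_nonneg σ), sqrt_sq hσ0.le]
      field_simp
    rw [this, hδc]
    exact one_half_add_neg_sub_div_div_sqrt_le hc hε1 ht (hδc ▸ hδ1)

/-- Theorem 3 (Gaussian mechanism) in one dimension: Gaussians with means at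
distance at most `S` and common standard deviation
`σ = S·√(2·log(1.25/δ))/ε` satisfy the `(ε, δ)`-DP inequality. -/
theorem gaussian_mechanism_dp
    (ε δ S : ℝ) (hε0 : 0 < ε) (hε1 : ε ≤ 1) (hδ0 : 0 < δ) (hδ1 : δ < 1) (hS : 0 < S)
    (σ : ℝ) (hσ : σ = S * Real.sqrt (2 * Real.log (1.25 / δ)) / ε)
    (a b : ℝ) (hab : |a - b| ≤ S) :
    ∀ O : Set ℝ, MeasurableSet O →
      gaussianReal a ((σ ^ 2).toNNReal) O ≤
        ENNReal.ofReal (Real.exp ε) * gaussianReal b ((σ ^ 2).toNNReal) O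
          + ENNReal.ofReal δ := by
  intro O hO
  have hσ0 : 0 < σ :=
    hσ ▸ div_pos (mul_pos hS (sqrt_two_mul_log_div_pos hδ0 (by linarith))) hε0
  have hv0 : (σ ^ 2).toNNReal ≠ 0 := (Real.toNNReal_pos.mpr (by positivity)).ne'
  calc gaussianReal a ((σ ^ 2).toNNReal) O
      ≤ ENNReal.ofReal (exp ε) * gaussianReal b ((σ ^ 2).toNNReal) O
        + gaussianReal 0 (σ ^ 2).toNNReal (Ioi ((σ ^ 2).toNNReal * ε / S - S / 2)) :=
        gaussianReal_le_exp_mul_add_tail hv0 hε0.le hab hO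
    _ ≤ ENNReal.ofReal (exp ε) * gaussianReal b ((σ ^ 2).toNNReal) O + ENNReal.ofReal δ := by
        gcongr
        exact gaussianReal_zero_Ioi_le_of_gaussian_mechanism hε0 hε1 hδ0 hδ1 hS hσ
end
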